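/- Let (w̃, m̃, H̃) solve the cell problem: for each x ∈ 𝕋^d and Λ ∈ ℝ^d, (1/2)|Λ+∇_y w̃(x,Λ,y)|² + V(x,y) = ln m̃(x,Λ,y) + H̃(x,Λ) and −div_y(m̃(Λ+∇_y w̃)) = 0 in 𝒴^d with ∫_{𝒴^d} m̃ dy = 1, m̃ > 0. Then for every x ∈ 𝕋^d and Λ ∈ ℝ^d: |Λ|²/2 + inf_{(x,y)} V(x,y) ≤ H̃(x,Λ) ≤ sup_{(x,y)} V(x,y) + |Λ|²/2, and ∫_{𝒴^d} |∇_y w̃(x,Λ,y)|² dy ≤ 2( sup_{(x,y)} V(x,y) − inf_{(x,y)} V(x,y) ). -/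

import Mathlib

open MeasureTheory Filter Topology Function

noncomputable section

/-- The unit cell `𝒴^d = [0,1)^d`. -/
def cube (d : ℕ) : Set (Fin d → ℝ) := Set.univ.pi fun _ => Set.Ico (0 : ℝ) 1

/-- `ℤ^d`-periodicity of a function on `ℝ^d`; functions on the torus `𝕋^d`
(and `𝒴^d`-periodic functions) are identified with such functions. -/
def ZPer {d : ℕ} (f : (Fin d → ℝ) → ℝ) : Prop :=
  ∀ (x : Fin d → ℝ) (k : Fin d → ℤ), f (fun i => x i + (k i : ℝ)) = f x

/-- The `i`-th partial derivative. -/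
def pder {d : ℕ} (i : Fin d) (f : (Fin d → ℝ) → ℝ) (x : Fin d → ℝ) : ℝ :=
  fderiv ℝ f x (Pi.single i 1)

/-- `V : 𝕋^d × ℝ^d → ℝ` smooth, `𝒴^d`-periodic in the second variable
(and periodic in the first, i.e. defined on the torus). -/
def SmoothV {d : ℕ} (V : (Fin d → ℝ) → (Fin d → ℝ) → ℝ) : Prop :=
  ContDiff ℝ (⊤ : ℕ∞) (uncurry V) ∧ (∀ y, ZPer fun x => V x y) ∧ (∀ x, ZPer (V x))

/-- `sup_{(x,y) ∈ 𝕋^d × 𝒴^d} V (x,y)` (by periodicity, the sup over all of `ℝ^d × ℝ^d`). -/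
def supV {d : ℕ} (V : (Fin d → ℝ) → (Fin d → ℝ) → ℝ) : ℝ :=
  ⨆ q : (Fin d → ℝ) × (Fin d → ℝ), V q.1 q.2

/-- `inf_{(x,y) ∈ 𝕋^d × 𝒴^d} V (x,y)`. -/
def infV {d : ℕ} (V : (Fin d → ℝ) → (Fin d → ℝ) → ℝ) : ℝ :=
  ⨅ q : (Fin d → ℝ) × (Fin d → ℝ), V q.1 q.2

/-- `(w, m, H)` is a classical solution of the cell problem at `(x, Λ)`:
`|Λ+∇_y w|²/2 + V(x,y) = ln m + H`, `-div_y(m (Λ+∇_y w)) = 0` in `𝒴^d`, `∫_{𝒴^d} m = 1`. -/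
def CellSolAt {d : ℕ} (V : (Fin d → ℝ) → (Fin d → ℝ) → ℝ)
    (x Λ : Fin d → ℝ) (w m : (Fin d → ℝ) → ℝ) (H : ℝ) : Prop :=
  ContDiff ℝ 2 w ∧ ZPer w ∧ ContDiff ℝ 1 m ∧ ZPer m ∧ (∀ y, 0 < m y) ∧
  (∀ y, (∑ i, (Λ i + pder i w y) ^ 2) / 2 + V x y = Real.log (m y) + H) ∧
  (∀ y, (∑ i, pder i (fun z => m z * (Λ i + pder i w z)) y) = 0) ∧
  (∫ y in cube d, m y) = 1

namespace Stmt11Aux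

open MeasureTheory

lemma measurableSet_cube (d : ℕ) : MeasurableSet (cube d) :=
  MeasurableSet.univ_pi fun _ => measurableSet_Ico

lemma cube_subset_Icc (d : ℕ) : cube d ⊆ Set.Icc (0 : Fin d → ℝ) 1 := fun x hx =>
  ⟨fun i => (hx i trivial).1, fun i => (hx i trivial).2.le⟩

lemma volume_cube (d : ℕ) : volume (cube d) = 1 := by
  simp [cube, volume_pi_pi, Real.volume_Ico]

lemma integrableOn_cube {d : ℕ} {f : (Fin d → ℝ) → ℝ} (hf : Continuous f) :
    IntegrableOn f (cube d) := by
  exact (hf.continuousOn.integrableOn_compact isCompact_Icc).mono_set (cube_subset_Icc d)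

lemma setIntegral_one (d : ℕ) (c : ℝ) : ∫ _ in cube d, c = c := by
  rw [setIntegral_const, measureReal_def, volume_cube]; simp

lemma contDiff_pder {d : ℕ} {f : (Fin d → ℝ) → ℝ} {n : ℕ} (hf : ContDiff ℝ (n + 1) f)
    (i : Fin d) : ContDiff ℝ n (pder i f) := by
  have h := hf.fderiv_right (m := n) (by norm_cast)
  exact h.clm_apply contDiff_const

lemma ZPer_pder {d : ℕ} {f : (Fin d → ℝ) → ℝ} (hf : Differentiable ℝ f) (hp : ZPer f)
    (i : Fin d) : ZPer (pder i f) := by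
  intro x k
  set c : Fin d → ℝ := fun j => (k j : ℝ) with hc
  have h1 : (fun y : Fin d → ℝ => f (y + c)) = f := funext fun y => hp y k
  have h2 : HasFDerivAt (fun y : Fin d → ℝ => f (y + c))
      (fderiv ℝ f (x + c)) x := by
    have := (hf (x + c)).hasFDerivAt
    have hid : HasFDerivAt (fun y : Fin d → ℝ => y + c)
        (ContinuousLinearMap.id ℝ (Fin d → ℝ)) x := (hasFDerivAt_id x).add_const c
    simpa [Function.comp_def] using this.comp x hid
  rw [h1] at h2
  have h3 : fderiv ℝ f x = fderiv ℝ f (x + c) := h2.fderiv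
  show fderiv ℝ f (fun i => x i + (k i : ℝ)) (Pi.single i 1) = fderiv ℝ f x (Pi.single i 1)
  have : (fun i => x i + (k i : ℝ)) = x + c := rfl
  rw [this, ← h3]

lemma pder_mul {d : ℕ} {a b : (Fin d → ℝ) → ℝ} {y : Fin d → ℝ}
    (ha : DifferentiableAt ℝ a y) (hb : DifferentiableAt ℝ b y) (i : Fin d) :
    pder i (fun z => a z * b z) y = pder i a y * b y + a y * pder i b y := by
  unfold pder
  rw [fderiv_fun_mul ha hb]
  simp only [ContinuousLinearMap.add_apply, ContinuousLinearMap.coe_smul', Pi.smul_apply, smul_eq_mul]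
  ring

lemma setIntegral_pder_eq_zero {d : ℕ} (i : Fin d) {f : (Fin d → ℝ) → ℝ}
    (hf : ContDiff ℝ 1 f) (hp : ZPer f) :
    ∫ y in cube d, pder i f y = 0 := by
  cases d with
  | zero => exact i.elim0
  | succ n =>
    have hfd : Differentiable ℝ f := hf.differentiable one_ne_zero
    have hpc : Continuous (pder i f) :=
      ((hf.fderiv_right (m := 0) (by norm_num)).clm_apply contDiff_const).continuous
    set e : (Fin (n + 1) → ℝ) ≃ᵐ ℝ × (Fin n → ℝ) :=
      MeasurableEquiv.piFinSuccAbove (fun _ => ℝ) i with he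
    have hem : MeasurePreserving e.symm :=
      (volume_preserving_piFinSuccAbove (fun _ : Fin (n + 1) => ℝ) i).symm _
    have hesymm : ∀ p : ℝ × (Fin n → ℝ), e.symm p = i.insertNth p.1 p.2 := by
      intro p; rfl
    have hpre : e.symm ⁻¹' cube (n + 1) = Set.Ico (0 : ℝ) 1 ×ˢ cube n := by
      ext p
      simp only [Set.mem_preimage, cube, Set.mem_univ_pi, Set.mem_prod, hesymm]
      constructor
      · intro hmem
        refine ⟨by simpa using hmem i, fun j => by simpa using hmem (i.succAbove j)⟩
      · rintro ⟨h1, h2⟩ j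
        refine Fin.succAboveCases i ?_ ?_ j
        · simpa using h1
        · intro k; simpa using h2 k
    have hins : Continuous fun p : ℝ × (Fin n → ℝ) => (i.insertNth p.1 p.2 : Fin (n + 1) → ℝ) :=
      Continuous.finInsertNth (A := fun _ => ℝ) i continuous_fst continuous_snd
    have hline : ∀ (z : Fin n → ℝ) (t : ℝ),
        HasDerivAt (fun s => f (i.insertNth s z)) (pder i f (i.insertNth t z)) t := by
      intro z t
      have hkey : (fun s : ℝ => (i.insertNth s z : Fin (n + 1) → ℝ)) =
          fun s => i.insertNth (0 : ℝ) z + s • Pi.single i (1 : ℝ) := by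
        funext s
        funext j
        refine Fin.succAboveCases i ?_ (fun k => ?_) j
        · simp
        · simp [Pi.single_eq_of_ne (i.succAbove_ne k)]
      have h1 : HasDerivAt (fun s : ℝ => (i.insertNth s z : Fin (n + 1) → ℝ))
          (Pi.single i (1 : ℝ)) t := by
        rw [hkey]
        have := ((hasDerivAt_id t).smul_const
          (Pi.single i (1 : ℝ) : Fin (n + 1) → ℝ)).const_add
          (i.insertNth (0 : ℝ) z : Fin (n + 1) → ℝ)
        simpa using this
      exact (hfd _).hasFDerivAt.comp_hasDerivAt t h1
    have hzero : ∀ z : Fin n → ℝ, ∫ t in Set.Ico (0 : ℝ) 1, pder i f (i.insertNth t z) = 0 := by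
      intro z
      have hIoc : ∫ t in Set.Ico (0 : ℝ) 1, pder i f (i.insertNth t z) =
          ∫ t in (0:ℝ)..1, pder i f (i.insertNth t z) := by
        rw [intervalIntegral.integral_of_le zero_le_one,
          Measure.restrict_congr_set Ico_ae_eq_Ioc]
      rw [hIoc]
      have hcont : Continuous fun t : ℝ => pder i f (i.insertNth t z) :=
        hpc.comp (Continuous.finInsertNth (A := fun _ => ℝ) i continuous_id continuous_const)
      rw [intervalIntegral.integral_eq_sub_of_hasDerivAt (fun t _ => hline z t)
        (hcont.intervalIntegrable _ _)]
      have hper := hp (i.insertNth (0 : ℝ) z) (Pi.single i 1)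
      have harg : (fun j => (i.insertNth (0 : ℝ) z : Fin (n + 1) → ℝ) j +
            ((Pi.single i (1 : ℤ) : Fin (n + 1) → ℤ) j : ℝ)) =
          (i.insertNth (1 : ℝ) z : Fin (n + 1) → ℝ) := by
        funext j
        refine Fin.succAboveCases i ?_ (fun k => ?_) j
        · simp
        · simp [Pi.single_eq_of_ne (i.succAbove_ne k)]
      rw [harg] at hper
      rw [hper, sub_self]
    have hint : IntegrableOn (fun p : ℝ × (Fin n → ℝ) => pder i f (i.insertNth p.1 p.2))
        (Set.Ico (0 : ℝ) 1 ×ˢ cube n) := by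
      have hK : IsCompact (Set.Icc (0 : ℝ) 1 ×ˢ Set.Icc (0 : Fin n → ℝ) 1) :=
        isCompact_Icc.prod isCompact_Icc
      refine ((hpc.comp hins).continuousOn.integrableOn_compact hK).mono_set ?_
      exact Set.prod_mono Set.Ico_subset_Icc_self (cube_subset_Icc n)
    calc ∫ y in cube (n + 1), pder i f y
        = ∫ p in e.symm ⁻¹' cube (n + 1), pder i f (e.symm p) :=
          (hem.setIntegral_preimage_emb e.symm.measurableEmbedding _ _).symm
      _ = ∫ p in Set.Ico (0 : ℝ) 1 ×ˢ cube n, pder i f (i.insertNth p.1 p.2) := by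
          rw [hpre]; exact setIntegral_congr_fun
            ((measurableSet_Ico).prod (measurableSet_cube n)) fun p _ => by rw [hesymm]
      _ = ∫ z in cube n, ∫ t in Set.Ico (0 : ℝ) 1, pder i f (i.insertNth t z) := by
          rw [Measure.volume_eq_prod, ← Measure.prod_restrict]
          exact integral_prod_symm _ (by
            rwa [Measure.prod_restrict, ← Measure.volume_eq_prod])
      _ = 0 := by simp [hzero]

end Stmt11Aux
namespace Stmt11Aux

lemma continuous_pder {d : ℕ} {f : (Fin d → ℝ) → ℝ} (hf : ContDiff ℝ 1 f) (i : Fin d) :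
    Continuous (pder i f) :=
  ((hf.fderiv_right (m := 0) (by norm_num)).clm_apply contDiff_const).continuous

lemma range_V_subset {d : ℕ} {V : (Fin d → ℝ) → (Fin d → ℝ) → ℝ} (hV : SmoothV V) :
    Set.range (fun q : (Fin d → ℝ) × (Fin d → ℝ) => V q.1 q.2) ⊆
      Function.uncurry V '' (Set.Icc 0 1 ×ˢ Set.Icc 0 1) := by
  rintro v ⟨⟨x, y⟩, rfl⟩
  refine ⟨(fun i => Int.fract (x i), fun i => Int.fract (y i)),
    ⟨⟨fun i => Int.fract_nonneg _, fun i => (Int.fract_lt_one _).le⟩,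
     ⟨fun i => Int.fract_nonneg _, fun i => (Int.fract_lt_one _).le⟩⟩, ?_⟩
  have hx1 : (fun i => x i + (((fun j => -⌊x j⌋) i : ℤ) : ℝ)) = fun i => Int.fract (x i) := by
    funext i
    rw [← Int.self_sub_floor (x i)]
    push_cast
    ring
  have hy1 : (fun i => y i + (((fun j => -⌊y j⌋) i : ℤ) : ℝ)) = fun i => Int.fract (y i) := by
    funext i
    rw [← Int.self_sub_floor (y i)]
    push_cast
    ring
  have h1 : V (fun i => Int.fract (x i)) y = V x y := by
    rw [← hx1]; exact hV.2.1 y x (fun j => -⌊x j⌋)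
  have h2 : V (fun i => Int.fract (x i)) (fun i => Int.fract (y i)) =
      V (fun i => Int.fract (x i)) y := by
    rw [← hy1]; exact hV.2.2 _ y (fun j => -⌊y j⌋)
  show Function.uncurry V _ = V x y
  simpa [Function.uncurry] using h2.trans h1

lemma V_le_supV {d : ℕ} {V : (Fin d → ℝ) → (Fin d → ℝ) → ℝ} (hV : SmoothV V)
    (x y : Fin d → ℝ) : V x y ≤ supV V := by
  have hbdd : BddAbove (Set.range fun q : (Fin d → ℝ) × (Fin d → ℝ) => V q.1 q.2) :=
    (((isCompact_Icc.prod isCompact_Icc).image_of_continuousOn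
      (hV.1.continuous.continuousOn)).bddAbove).mono (range_V_subset hV)
  exact le_ciSup hbdd (x, y)

lemma infV_le_V {d : ℕ} {V : (Fin d → ℝ) → (Fin d → ℝ) → ℝ} (hV : SmoothV V)
    (x y : Fin d → ℝ) : infV V ≤ V x y := by
  have hbdd : BddBelow (Set.range fun q : (Fin d → ℝ) × (Fin d → ℝ) => V q.1 q.2) :=
    (((isCompact_Icc.prod isCompact_Icc).image_of_continuousOn
      (hV.1.continuous.continuousOn)).bddBelow).mono (range_V_subset hV)
  exact ciInf_le hbdd (x, y)

end Stmt11Aux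
open Stmt11Aux in
/-- coercivity bounds for the effective Hamiltonian `H̃` of the cell problem,
and the bound `∫_{𝒴^d} |∇_y w̃|² ≤ 2(sup V - inf V)`. -/
theorem stmt11 {d : ℕ} (V : (Fin d → ℝ) → (Fin d → ℝ) → ℝ) (hV : SmoothV V)
    (w m : (Fin d → ℝ) → (Fin d → ℝ) → (Fin d → ℝ) → ℝ)
    (H : (Fin d → ℝ) → (Fin d → ℝ) → ℝ)
    (hsol : ∀ x Λ, CellSolAt V x Λ (w x Λ) (m x Λ) (H x Λ)) :
    ∀ (x Λ : Fin d → ℝ),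
      ((∑ i, (Λ i) ^ 2) / 2 + infV V ≤ H x Λ ∧
        H x Λ ≤ supV V + (∑ i, (Λ i) ^ 2) / 2) ∧
      (∫ y in cube d, ∑ i, (pder i (w x Λ) y) ^ 2) ≤ 2 * (supV V - infV V) := by
  intro x Λ
  obtain ⟨hW2, hWper, hM1, hMper, hMpos, hHJB, hdiv, hMint⟩ := hsol x Λ
  set W := w x Λ with hWdef
  set M := m x Λ with hMdef
  have hW1 : ContDiff ℝ 1 W := hW2.of_le (by norm_num)
  have hWd : Differentiable ℝ W := hW1.differentiable one_ne_zero
  have hg1 : ∀ i, ContDiff ℝ 1 (pder i W) := fun i =>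
    contDiff_pder (n := 1) (by exact_mod_cast hW2) i
  have hgc : ∀ i, Continuous (pder i W) := fun i => (hg1 i).continuous
  have hgper : ∀ i, ZPer (pder i W) := fun i => ZPer_pder hWd hWper i
  have hMc : Continuous M := hM1.continuous
  have hVxc : Continuous (V x) := hV.1.continuous.comp (continuous_const.prodMk continuous_id)
  have hlogc : Continuous fun y => Real.log (M y) := hMc.log fun y => (hMpos y).ne'
  set L := ∑ i, (Λ i) ^ 2 with hLdef
  -- continuity of basic integrands
  have hPc : Continuous fun y => ∑ i, (Λ i + pder i W y) ^ 2 :=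
    continuous_finset_sum _ fun i _ => (continuous_const.add (hgc i)).pow 2
  have hAc : Continuous fun y => ∑ i, (pder i W y) ^ 2 :=
    continuous_finset_sum _ fun i _ => (hgc i).pow 2
  -- integrability
  have iP : IntegrableOn (fun y => ∑ i, (Λ i + pder i W y) ^ 2) (cube d) :=
    integrableOn_cube hPc
  have iA : IntegrableOn (fun y => ∑ i, (pder i W y) ^ 2) (cube d) := integrableOn_cube hAc
  have iV : IntegrableOn (fun y => V x y) (cube d) := integrableOn_cube hVxc
  have iM : IntegrableOn M (cube d) := integrableOn_cube hMc
  have ilog : IntegrableOn (fun y => Real.log (M y)) (cube d) := integrableOn_cube hlogc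
  have iMP : IntegrableOn (fun y => M y * ∑ i, (Λ i + pder i W y) ^ 2) (cube d) :=
    integrableOn_cube (hMc.mul hPc)
  have iMV : IntegrableOn (fun y => M y * V x y) (cube d) := integrableOn_cube (hMc.mul hVxc)
  have iMlog : IntegrableOn (fun y => M y * Real.log (M y)) (cube d) :=
    integrableOn_cube (hMc.mul hlogc)
  have iSum : IntegrableOn (fun y => ∑ i, Λ i * (M y * (Λ i + pder i W y))) (cube d) :=
    integrableOn_cube (continuous_finset_sum _ fun i _ =>
      continuous_const.mul (hMc.mul (continuous_const.add (hgc i))))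
  -- abbreviations for the integrals
  set A := ∫ y in cube d, ∑ i, (pder i W y) ^ 2 with hAdef
  set IP := ∫ y in cube d, ∑ i, (Λ i + pder i W y) ^ 2 with hIPdef
  set B := ∫ y in cube d, V x y with hBdef
  set C := ∫ y in cube d, Real.log (M y) with hCdef
  set Q := ∫ y in cube d, M y * ∑ i, (Λ i + pder i W y) ^ 2 with hQdef
  set BM := ∫ y in cube d, M y * V x y with hBMdef
  set CM := ∫ y in cube d, M y * Real.log (M y) with hCMdef
  have hA0 : 0 ≤ A := setIntegral_nonneg (measurableSet_cube d) fun y _ =>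
    Finset.sum_nonneg fun i _ => sq_nonneg _
  -- (1) IP = L + A
  have hIPeq : IP = L + A := by
    have hsplit : ∀ y, (∑ i, (Λ i + pder i W y) ^ 2) =
        L + ((∑ i, (2 * Λ i) * pder i W y) + ∑ i, (pder i W y) ^ 2) := by
      intro y
      rw [hLdef, ← Finset.sum_add_distrib, ← Finset.sum_add_distrib]
      exact Finset.sum_congr rfl fun i _ => by ring
    have icross : ∀ i : Fin d, IntegrableOn (fun y => (2 * Λ i) * pder i W y) (cube d) :=
      fun i => integrableOn_cube (continuous_const.mul (hgc i))
    have icrossS : IntegrableOn (fun y => ∑ i, (2 * Λ i) * pder i W y) (cube d) :=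
      integrableOn_cube (continuous_finset_sum _ fun i _ => continuous_const.mul (hgc i))
    have hcross : (∫ y in cube d, ∑ i, (2 * Λ i) * pder i W y) = 0 := by
      rw [integral_finset_sum _ fun i _ => icross i]
      refine Finset.sum_eq_zero fun i _ => ?_
      rw [integral_const_mul, setIntegral_pder_eq_zero i hW1 hWper, mul_zero]
    have iMid : IntegrableOn
        (fun y => (∑ i, 2 * Λ i * pder i W y) + ∑ i, (pder i W y) ^ 2) (cube d) :=
      integrableOn_cube ((continuous_finset_sum _ fun i _ =>
        continuous_const.mul (hgc i)).add hAc)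
    rw [hIPdef]
    simp only [hsplit]
    rw [integral_add (integrableOn_cube continuous_const) iMid,
      integral_add icrossS iA, hcross, setIntegral_one, zero_add]
  -- (2) integrated HJB : IP/2 + B = C + H x Λ
  have hHeq : IP / 2 + B = C + H x Λ := by
    have h1 : (fun y => (∑ i, (Λ i + pder i W y) ^ 2) / 2 + V x y) =
        fun y => Real.log (M y) + H x Λ := funext fun y => hHJB y
    have h2 : ∫ y in cube d, ((∑ i, (Λ i + pder i W y) ^ 2) / 2 + V x y) =
        ∫ y in cube d, (Real.log (M y) + H x Λ) := by rw [h1]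
    rw [integral_add (iP.div_const 2) iV, integral_add ilog (integrableOn_cube continuous_const),
      integral_div, setIntegral_one] at h2
    exact h2
  -- (3) C ≤ 0
  have hC0 : C ≤ 0 := by
    have h1 : C ≤ ∫ y in cube d, (M y - 1) := by
      refine setIntegral_mono_on ilog (iM.sub (integrableOn_cube continuous_const))
        (measurableSet_cube d) fun y _ => ?_
      exact Real.log_le_sub_one_of_pos (hMpos y)
    have h2 : (∫ y in cube d, (M y - 1)) = 0 := by
      rw [integral_sub iM (integrableOn_cube continuous_const), hMint, setIntegral_one, sub_self]
    linarith
  -- (4) infV V ≤ B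
  have hBlow : infV V ≤ B := by
    have h1 : (∫ _ in cube d, infV V) ≤ B :=
      setIntegral_mono_on (integrableOn_cube continuous_const) iV
        (measurableSet_cube d) fun y _ => infV_le_V hV x y
    rwa [setIntegral_one] at h1
  -- (5) divergence identity : Q = ∫ ∑ Λ i * (M * u i)
  have hFc : ∀ i : Fin d, ContDiff ℝ 1 (fun z => M z * (Λ i + pder i W z)) := fun i =>
    hM1.mul (contDiff_const.add (hg1 i))
  have hGc : ∀ i : Fin d, ContDiff ℝ 1 (fun z => W z * (M z * (Λ i + pder i W z))) := fun i =>
    hW1.mul (hFc i)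
  have hGper : ∀ i : Fin d, ZPer (fun z => W z * (M z * (Λ i + pder i W z))) := by
    intro i y k
    simp only
    rw [hWper y k, hMper y k, hgper i y k]
  have hptdiv : ∀ y, (∑ i, pder i (fun z => W z * (M z * (Λ i + pder i W z))) y) =
      ∑ i, pder i W y * (M y * (Λ i + pder i W y)) := by
    intro y
    have h1 : ∀ i : Fin d, pder i (fun z => W z * (M z * (Λ i + pder i W z))) y =
        pder i W y * (M y * (Λ i + pder i W y)) +
          W y * pder i (fun z => M z * (Λ i + pder i W z)) y :=
      fun i => pder_mul (hWd y) (((hFc i).differentiable one_ne_zero) y) i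
    rw [Finset.sum_congr rfl fun i _ => h1 i, Finset.sum_add_distrib, ← Finset.mul_sum,
      hdiv y, mul_zero, add_zero]
  have hzero2 : (∫ y in cube d, ∑ i, pder i W y * (M y * (Λ i + pder i W y))) = 0 := by
    have h1 : (∫ y in cube d, ∑ i, pder i (fun z => W z * (M z * (Λ i + pder i W z))) y) = 0 := by
      rw [integral_finset_sum _ fun i _ =>
        integrableOn_cube (continuous_pder (hGc i) i)]
      exact Finset.sum_eq_zero fun i _ => setIntegral_pder_eq_zero i (hGc i) (hGper i)
    simpa only [hptdiv] using h1
  have hQeq : Q = ∫ y in cube d, ∑ i, Λ i * (M y * (Λ i + pder i W y)) := by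
    have hpt2 : ∀ y, (∑ i, pder i W y * (M y * (Λ i + pder i W y))) =
        M y * (∑ i, (Λ i + pder i W y) ^ 2) -
          ∑ i, Λ i * (M y * (Λ i + pder i W y)) := by
      intro y
      rw [Finset.mul_sum, ← Finset.sum_sub_distrib]
      exact Finset.sum_congr rfl fun i _ => by ring
    have h2 := hzero2
    simp only [hpt2] at h2
    rw [integral_sub iMP iSum] at h2
    rw [hQdef]
    linarith
  -- (6) Q ≤ L
  have hQle : Q ≤ L := by
    have hpt3 : ∀ y ∈ cube d, (∑ i, Λ i * (M y * (Λ i + pder i W y))) ≤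
        M y * (∑ i, (Λ i + pder i W y) ^ 2) / 2 + M y * L / 2 := by
      intro y _
      have h1 : (∑ i, Λ i * (M y * (Λ i + pder i W y))) ≤
          ∑ i, (M y * (Λ i + pder i W y) ^ 2 / 2 + M y * (Λ i) ^ 2 / 2) := by
        refine Finset.sum_le_sum fun i _ => ?_
        nlinarith [mul_nonneg (hMpos y).le (sq_nonneg (pder i W y))]
      have h2 : (∑ i, (M y * (Λ i + pder i W y) ^ 2 / 2 + M y * (Λ i) ^ 2 / 2)) =
          M y * (∑ i, (Λ i + pder i W y) ^ 2) / 2 + M y * L / 2 := by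
        rw [Finset.sum_add_distrib, hLdef, Finset.mul_sum, Finset.mul_sum,
          Finset.sum_div, Finset.sum_div]
      linarith [h1, h2.le]
    have h3 : Q ≤ ∫ y in cube d,
        (M y * (∑ i, (Λ i + pder i W y) ^ 2) / 2 + M y * L / 2) := by
      rw [hQeq]
      exact setIntegral_mono_on iSum
        ((iMP.div_const 2).add ((iM.mul_const L).div_const 2))
        (measurableSet_cube d) hpt3
    have h4 : (∫ y in cube d,
        (M y * (∑ i, (Λ i + pder i W y) ^ 2) / 2 + M y * L / 2)) = Q / 2 + L / 2 := by
      rw [integral_add (iMP.div_const 2) ((iM.mul_const L).div_const 2)]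
      have e1 : (∫ y in cube d, M y * (∑ i, (Λ i + pder i W y) ^ 2) / 2) = Q / 2 := by
        rw [integral_div]
      have e2 : (∫ y in cube d, M y * L / 2) = L / 2 := by
        rw [integral_div, integral_mul_const, hMint, one_mul]
      rw [e1, e2]
    linarith
  -- (7) HJB times M : Q/2 + BM = CM + H x Λ
  have hH2 : Q / 2 + BM = CM + H x Λ := by
    have h1 : (fun y => M y * (∑ i, (Λ i + pder i W y) ^ 2) / 2 + M y * V x y) =
        fun y => M y * Real.log (M y) + H x Λ * M y := by
      funext y
      have := hHJB y
      linear_combination M y * this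
    have h2 : ∫ y in cube d, (M y * (∑ i, (Λ i + pder i W y) ^ 2) / 2 + M y * V x y) =
        ∫ y in cube d, (M y * Real.log (M y) + H x Λ * M y) := by rw [h1]
    rw [integral_add (iMP.div_const 2) iMV,
      integral_add iMlog (integrableOn_cube (f := fun y => H x Λ * M y) (continuous_const.mul hMc)), integral_div,
      integral_const_mul, hMint, mul_one] at h2
    exact h2
  -- (8) BM ≤ supV
  have hBMle : BM ≤ supV V := by
    have h1 : BM ≤ ∫ y in cube d, M y * supV V :=
      setIntegral_mono_on iMV (iM.mul_const _) (measurableSet_cube d) fun y _ =>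
        mul_le_mul_of_nonneg_left (V_le_supV hV x y) (hMpos y).le
    rwa [integral_mul_const, hMint, one_mul] at h1
  -- (9) 0 ≤ CM
  have hCM0 : 0 ≤ CM := by
    have h1 : (∫ y in cube d, (M y - 1)) ≤ CM := by
      refine setIntegral_mono_on (iM.sub (integrableOn_cube continuous_const)) iMlog
        (measurableSet_cube d) fun y _ => ?_
      have h2 := Real.one_sub_inv_le_log_of_pos (hMpos y)
      have h3 : M y * (M y)⁻¹ = 1 := mul_inv_cancel₀ (hMpos y).ne'
      nlinarith [hMpos y]
    have h2 : (∫ y in cube d, (M y - 1)) = 0 := by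
      rw [integral_sub iM (integrableOn_cube continuous_const), hMint, setIntegral_one, sub_self]
    linarith
  -- conclusion
  have hupper : H x Λ ≤ supV V + L / 2 := by linarith
  have hlower : L / 2 + infV V ≤ H x Λ := by
    have : IP / 2 = L / 2 + A / 2 := by rw [hIPeq]; ring
    linarith
  refine ⟨⟨hlower, hupper⟩, ?_⟩
  have : A ≤ 2 * (supV V - infV V) := by
    have hIP2 : IP / 2 = L / 2 + A / 2 := by rw [hIPeq]; ring
    linarith
  exact this
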